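/- arXiv:2211.15193 — 2 statements merged into one kernel-verified Lean document; each statement's English description precedes it below -/
import Mathlib

section
/- For every prime p ≡ 1 or 7 (mod 24), the number of integer solutions (x,y) to p = x² + 6y² is exactly 4. -/
open scoped NumberTheorySymbols

lemma no23 (p : ℕ) (hp3 : p % 3 = 1) : ¬ ∃ u v : ℤ, 2 * u ^ 2 + 3 * v ^ 2 = (p : ℤ) := by
  rintro ⟨u, v, huv⟩
  have h3 : ((2 * u ^ 2 + 3 * v ^ 2 : ℤ) : ZMod 3) = ((p : ℤ) : ZMod 3) := by rw [huv]
  have hpc : ((p : ℕ) : ZMod 3) = 1 := by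
    rw [← ZMod.natCast_mod p 3, hp3]; norm_num
  push_cast at h3
  rw [hpc] at h3
  have : ∀ c d : ZMod 3, 2 * c ^ 2 + 3 * d ^ 2 ≠ 1 := by decide
  exact this _ _ h3

lemma sq_neg_six (p : ℕ) (hp : p.Prime) (h : p % 24 = 1 ∨ p % 24 = 7) :
    IsSquare ((-6 : ℤ) : ZMod p) := by
  haveI : Fact p.Prime := ⟨hp⟩
  apply ZMod.isSquare_of_jacobiSym_eq_one
  have hodd : Odd p := Nat.odd_iff.mpr (by omega)
  have hmr := jacobiSym.mod_right (-6 : ℤ) hodd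
  norm_num at hmr
  rw [hmr]
  rcases h with h | h <;> rw [h]
  · exact jacobiSym.one_right _
  · rw [jacobiSym.mod_left]; norm_num

lemma case5 (p : ℕ) (hp3 : p % 3 = 1) (x y : ℤ) (hm : x ^ 2 + 6 * y ^ 2 = (p : ℤ) * 5) :
    False := by
  haveI : Fact (Nat.Prime 5) := ⟨by norm_num⟩
  have hcast : ((x : ℤ) : ZMod 5) ^ 2 + 6 * ((y : ℤ) : ZMod 5) ^ 2
      = ((p : ℕ) : ZMod 5) * 5 := by
    have hc2 : ((x ^ 2 + 6 * y ^ 2 : ℤ) : ZMod 5) = (((p : ℤ) * 5 : ℤ) : ZMod 5) := by rw [hm]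
    push_cast at hc2
    exact hc2
  have h5 : (5 : ZMod 5) = 0 := by rfl
  have hfac : (((x : ℤ) : ZMod 5) - 2 * ((y : ℤ) : ZMod 5))
      * (((x : ℤ) : ZMod 5) + 2 * ((y : ℤ) : ZMod 5)) = 0 := by
    linear_combination hcast + (((p : ℕ) : ZMod 5) - 2 * ((y : ℤ) : ZMod 5) ^ 2) * h5
  rcases mul_eq_zero.mp hfac with h0 | h0
  · have hdv : (5 : ℤ) ∣ x - 2 * y := by
      have := (ZMod.intCast_zmod_eq_zero_iff_dvd (x - 2 * y) 5).mp (by push_cast; linear_combination h0)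
      exact_mod_cast this
    obtain ⟨d, hd⟩ := hdv
    refine no23 p hp3 ⟨y + d, d, ?_⟩
    have hxe : x = 2 * y + 5 * d := by linarith
    have h5' : 5 * (2 * (y + d) ^ 2 + 3 * d ^ 2) = 5 * (p : ℤ) := by
      rw [hxe] at hm; linear_combination hm
    exact mul_left_cancel₀ (by norm_num) h5'
  · have hdv : (5 : ℤ) ∣ x + 2 * y := by
      have := (ZMod.intCast_zmod_eq_zero_iff_dvd (x + 2 * y) 5).mp (by push_cast; linear_combination h0)
      exact_mod_cast this
    obtain ⟨d, hd⟩ := hdv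
    refine no23 p hp3 ⟨y - d, d, ?_⟩
    have hxe : x = -2 * y + 5 * d := by linarith
    have h5' : 5 * (2 * (y - d) ^ 2 + 3 * d ^ 2) = 5 * (p : ℤ) := by
      rw [hxe] at hm; linear_combination hm
    exact mul_left_cancel₀ (by norm_num) h5'

set_option maxHeartbeats 1000000 in
lemma exists_rep (p : ℕ) (hp : p.Prime) (h : p % 24 = 1 ∨ p % 24 = 7) :
    ∃ a b : ℤ, a ^ 2 + 6 * b ^ 2 = (p : ℤ) := by
  haveI : Fact p.Prime := ⟨hp⟩
  have hpr3 : Prime (3 : ℤ) := by norm_num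
  have hp3 : p % 3 = 1 := by omega
  obtain ⟨z, hz⟩ := sq_neg_six p hp h
  have hz' : z * z = -6 := by push_cast at hz; exact hz.symm
  set s := Nat.sqrt p with hs
  have hcard : Fintype.card (ZMod p) < Fintype.card (Fin (s + 1) × Fin (s + 1)) := by
    rw [ZMod.card, Fintype.card_prod, Fintype.card_fin]
    nlinarith [Nat.lt_succ_sqrt p]
  obtain ⟨⟨i₁, j₁⟩, ⟨i₂, j₂⟩, hne, heq⟩ :=
    Fintype.exists_ne_map_eq_of_card_lt
      (fun ij : Fin (s + 1) × Fin (s + 1) => ((ij.1 : ℕ) : ZMod p) - z * ((ij.2 : ℕ) : ZMod p))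
      hcard
  simp only [Prod.mk.injEq] at heq
  set x : ℤ := (i₁ : ℕ) - ((i₂ : ℕ) : ℤ) with hx
  set y : ℤ := (j₁ : ℕ) - ((j₂ : ℕ) : ℤ) with hy
  have hxy : ((x : ℤ) : ZMod p) = z * ((y : ℤ) : ZMod p) := by
    rw [hx, hy]; push_cast
    linear_combination heq
  have hdvd : (p : ℤ) ∣ x ^ 2 + 6 * y ^ 2 := by
    rw [← ZMod.intCast_zmod_eq_zero_iff_dvd]
    push_cast
    rw [hxy]
    linear_combination (((y : ℤ) : ZMod p)) ^ 2 * hz'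
  have hx0y0 : x ≠ 0 ∨ y ≠ 0 := by
    by_contra hc
    push_neg at hc
    apply hne
    have e1 : i₁ = i₂ := by
      have := hc.1; rw [hx] at this; ext; omega
    have e2 : j₁ = j₂ := by
      have := hc.2; rw [hy] at this; ext; omega
    rw [e1, e2]
  have hxb : x ^ 2 ≤ (s : ℤ) ^ 2 := by
    have h1 : (i₁ : ℕ) ≤ s := Nat.lt_succ_iff.mp i₁.isLt
    have h2 : (i₂ : ℕ) ≤ s := Nat.lt_succ_iff.mp i₂.isLt
    have hb : -(s : ℤ) ≤ x ∧ x ≤ (s : ℤ) := by rw [hx]; constructor <;> push_cast <;> omega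
    nlinarith [hb.1, hb.2]
  have hyb : y ^ 2 ≤ (s : ℤ) ^ 2 := by
    have h1 : (j₁ : ℕ) ≤ s := Nat.lt_succ_iff.mp j₁.isLt
    have h2 : (j₂ : ℕ) ≤ s := Nat.lt_succ_iff.mp j₂.isLt
    have hb : -(s : ℤ) ≤ y ∧ y ≤ (s : ℤ) := by rw [hy]; constructor <;> push_cast <;> omega
    nlinarith [hb.1, hb.2]
  have hs2 : (s : ℤ) ^ 2 < (p : ℤ) := by
    have h1 : s * s ≤ p := by simpa [pow_two] using Nat.sqrt_le' p
    have h2 : s * s ≠ p := by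
      intro hsp
      rcases hp.eq_one_or_self_of_dvd s ⟨s, hsp.symm⟩ with h' | h'
      · rw [h'] at hsp; have := hp.one_lt; omega
      · rw [h'] at hsp; have := hp.one_lt; nlinarith
    have h3 : s * s < p := lt_of_le_of_ne h1 h2
    have h4 : ((s : ℕ) : ℤ) * ((s : ℕ) : ℤ) < ((p : ℕ) : ℤ) := by exact_mod_cast h3
    nlinarith [h4]
  have hpos : 0 < x ^ 2 + 6 * y ^ 2 := by
    rcases hx0y0 with h' | h'
    · have := Int.one_le_abs h'; nlinarith [sq_abs x, sq_nonneg y]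
    · have := Int.one_le_abs h'; nlinarith [sq_abs y, sq_nonneg x]
  obtain ⟨m, hm⟩ := hdvd
  clear hxy heq hne hcard hz hz' hx0y0 hx hy
  clear_value x y
  clear z i₁ j₁ i₂ j₂
  have hp1 : (1 : ℤ) ≤ (p : ℤ) := by exact_mod_cast hp.one_lt.le
  have hm1 : 1 ≤ m := by nlinarith
  have hm6 : m ≤ 6 := by nlinarith
  interval_cases m
  -- m = 1
  · exact ⟨x, y, by linarith⟩
  -- m = 2
  · exfalso
    have hex : Even (x ^ 2) := ⟨(p : ℤ) - 3 * y ^ 2, by linarith⟩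
    obtain ⟨u, hu⟩ := (Int.even_pow.mp hex).1
    refine no23 p hp3 ⟨u, y, ?_⟩
    have h2 : 2 * (2 * u ^ 2 + 3 * y ^ 2) = 2 * (p : ℤ) := by
      rw [hu] at hm; linear_combination hm
    exact mul_left_cancel₀ (by norm_num) h2
  -- m = 3
  · exfalso
    have h3x : (3 : ℤ) ∣ x :=
      hpr3.dvd_of_dvd_pow (n := 2) ⟨(p : ℤ) - 2 * y ^ 2, by linarith⟩
    obtain ⟨u, hu⟩ := h3x
    refine no23 p hp3 ⟨y, u, ?_⟩
    have h3 : 3 * (2 * y ^ 2 + 3 * u ^ 2) = 3 * (p : ℤ) := by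
      rw [hu] at hm; linear_combination hm
    exact mul_left_cancel₀ (by norm_num) h3
  -- m = 4
  · have hex : Even (x ^ 2) := ⟨2 * (p : ℤ) - 3 * y ^ 2, by linarith⟩
    obtain ⟨u, hu⟩ := (Int.even_pow.mp hex).1
    have h2 : 2 * (2 * u ^ 2 + 3 * y ^ 2) = 2 * (2 * (p : ℤ)) := by
      rw [hu] at hm; linear_combination hm
    have h2' : 2 * u ^ 2 + 3 * y ^ 2 = 2 * (p : ℤ) := mul_left_cancel₀ (by norm_num) h2
    have hey : Even (y ^ 2) := by
      have h3 : Even (3 * y ^ 2) := ⟨(p : ℤ) - u ^ 2, by linarith⟩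
      rcases Int.even_mul.mp h3 with h' | h'
      · obtain ⟨r, hr⟩ := h'; omega
      · exact h'
    obtain ⟨v, hv⟩ := (Int.even_pow.mp hey).1
    refine ⟨u, v, ?_⟩
    have h6 : 2 * (u ^ 2 + 6 * v ^ 2) = 2 * (p : ℤ) := by
      rw [hv] at h2'; linear_combination h2'
    exact mul_left_cancel₀ (by norm_num) h6
  -- m = 5
  · exact (case5 p hp3 x y hm).elim
  -- m = 6
  · have hex : Even (x ^ 2) := ⟨3 * (p : ℤ) - 3 * y ^ 2, by linarith⟩
    have h2x := (Int.even_pow.mp hex).1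
    have h3x : (3 : ℤ) ∣ x :=
      hpr3.dvd_of_dvd_pow (n := 2) ⟨2 * (p : ℤ) - 2 * y ^ 2, by linarith⟩
    have h6x : (6 : ℤ) ∣ x := by
      obtain ⟨u, hu⟩ := h2x; obtain ⟨v, hv⟩ := h3x; omega
    obtain ⟨u, hu⟩ := h6x
    refine ⟨y, u, ?_⟩
    have h6 : 6 * (y ^ 2 + 6 * u ^ 2) = 6 * (p : ℤ) := by
      rw [hu] at hm; linear_combination hm
    exact mul_left_cancel₀ (by norm_num) h6

theorem stmt9 (p : ℕ) (hp : p.Prime) (h : p % 24 = 1 ∨ p % 24 = 7) :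
    Nat.card {q : ℤ × ℤ // q.1 ^ 2 + 6 * q.2 ^ 2 = (p : ℤ)} = 4 := by
  obtain ⟨a, b, hab⟩ := exists_rep p hp h
  have hp3 : p % 3 = 1 := by omega
  have hppos : (0 : ℤ) < (p : ℤ) := by exact_mod_cast hp.pos
  have ha0 : a ≠ 0 := by
    rintro rfl
    have h3 : (3 : ℤ) ∣ (p : ℤ) := ⟨2 * b ^ 2, by linarith⟩
    have h3' : 3 ∣ p := by exact_mod_cast h3
    omega
  have hb0 : b ≠ 0 := by
    rintro rfl
    have ha2 : a ^ 2 = (p : ℤ) := by linarith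
    have hn : a.natAbs ^ 2 = p := by
      have := congrArg Int.natAbs ha2
      simpa [Int.natAbs_pow] using this
    rcases hp.eq_one_or_self_of_dvd a.natAbs ⟨a.natAbs, by rw [← pow_two]; exact hn.symm⟩ with h' | h'
    · rw [h'] at hn; simp at hn; have := hp.one_lt; omega
    · rw [h'] at hn; have := hp.one_lt; nlinarith
  have key : ∀ c d : ℤ, c ^ 2 + 6 * d ^ 2 = (p : ℤ) → c ^ 2 = a ^ 2 ∧ d ^ 2 = b ^ 2 := by
    intro c d hcd
    have hpZ : Prime ((p : ℕ) : ℤ) := Nat.prime_iff_prime_int.mp hp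
    have hdvd : ((p : ℕ) : ℤ) ∣ (a * d - b * c) * (a * d + b * c) :=
      ⟨d ^ 2 - b ^ 2, by linear_combination d ^ 2 * hab - b ^ 2 * hcd⟩
    have hadbc : a ^ 2 * d ^ 2 = b ^ 2 * c ^ 2 := by
      rcases hpZ.dvd_mul.mp hdvd with hc1 | hc1
      · obtain ⟨k, hk⟩ := hc1
        have hid1 : (p : ℤ) ^ 2 = (a * c + 6 * b * d) ^ 2 + 6 * ((p : ℤ) * k) ^ 2 := by
          linear_combination (-(c ^ 2 + 6 * d ^ 2)) * hab - (p : ℤ) * hcd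
            + (6 * (a * d - b * c) + 6 * (p : ℤ) * k) * hk
        have hk0 : k = 0 := by
          by_contra hk'
          have hk2 : 1 ≤ k ^ 2 := by nlinarith [Int.one_le_abs hk', sq_abs k, abs_nonneg k]
          nlinarith [sq_nonneg (a * c + 6 * b * d),
            mul_le_mul_of_nonneg_left hk2 (le_of_lt (mul_pos hppos hppos)), hid1]
        have had : a * d = b * c := by rw [hk0, mul_zero] at hk; linarith
        linear_combination (a * d + b * c) * had
      · obtain ⟨k, hk⟩ := hc1
        have hid1 : (p : ℤ) ^ 2 = (a * c - 6 * b * d) ^ 2 + 6 * ((p : ℤ) * k) ^ 2 := by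
          linear_combination (-(c ^ 2 + 6 * d ^ 2)) * hab - (p : ℤ) * hcd
            + (6 * (a * d + b * c) + 6 * (p : ℤ) * k) * hk
        have hk0 : k = 0 := by
          by_contra hk'
          have hk2 : 1 ≤ k ^ 2 := by nlinarith [Int.one_le_abs hk', sq_abs k, abs_nonneg k]
          nlinarith [sq_nonneg (a * c - 6 * b * d),
            mul_le_mul_of_nonneg_left hk2 (le_of_lt (mul_pos hppos hppos)), hid1]
        have had : a * d = -(b * c) := by rw [hk0, mul_zero] at hk; linarith
        linear_combination (a * d - b * c) * had
    have hc2 : c ^ 2 = a ^ 2 := by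
      have hmul : c ^ 2 * (p : ℤ) = a ^ 2 * (p : ℤ) := by
        linear_combination (-c ^ 2) * hab + a ^ 2 * hcd + (-6) * hadbc
      exact mul_right_cancel₀ (ne_of_gt hppos) hmul
    have hd2 : d ^ 2 = b ^ 2 := by
      have h6 : 6 * d ^ 2 = 6 * b ^ 2 := by linear_combination hcd - hab - hc2
      linarith
    exact ⟨hc2, hd2⟩
  have hset : {q : ℤ × ℤ | q.1 ^ 2 + 6 * q.2 ^ 2 = (p : ℤ)}
      = {((a, b) : ℤ × ℤ), (-a, b), (a, -b), (-a, -b)} := by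
    ext ⟨c, d⟩
    simp only [Set.mem_setOf_eq, Set.mem_insert_iff, Set.mem_singleton_iff, Prod.mk.injEq]
    constructor
    · intro hcd
      obtain ⟨hc2, hd2⟩ := key c d hcd
      have h1 : (c - a) * (c + a) = 0 := by linear_combination hc2
      have h2 : (d - b) * (d + b) = 0 := by linear_combination hd2
      rcases mul_eq_zero.mp h1 with h1' | h1' <;> rcases mul_eq_zero.mp h2 with h2' | h2'
      · exact Or.inl ⟨by linarith, by linarith⟩
      · exact Or.inr (Or.inr (Or.inl ⟨by linarith, by linarith⟩))
      · exact Or.inr (Or.inl ⟨by linarith, by linarith⟩)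
      · exact Or.inr (Or.inr (Or.inr ⟨by linarith, by linarith⟩))
    · rintro (⟨rfl, rfl⟩ | ⟨rfl, rfl⟩ | ⟨rfl, rfl⟩ | ⟨rfl, rfl⟩) <;> linear_combination hab
  have hcount : Nat.card {q : ℤ × ℤ // q.1 ^ 2 + 6 * q.2 ^ 2 = (p : ℤ)}
      = ({((a, b) : ℤ × ℤ), (-a, b), (a, -b), (-a, -b)} : Set (ℤ × ℤ)).ncard := by
    rw [← hset]
    exact Nat.card_coe_set_eq _
  rw [hcount]
  rw [Set.ncard_insert_of_notMem (by
        simp only [Set.mem_insert_iff, Set.mem_singleton_iff, Prod.mk.injEq]; omega),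
      Set.ncard_insert_of_notMem (by
        simp only [Set.mem_insert_iff, Set.mem_singleton_iff, Prod.mk.injEq]; omega),
      Set.ncard_insert_of_notMem (by
        simp only [Set.mem_singleton_iff, Prod.mk.injEq]; omega),
      Set.ncard_singleton]
end

section
/- Let m be a squarefree positive integer, m ≡ 11 (mod 24), whose prime factors all satisfy (−6/p) = 1, with t prime factors in total. Then R(m, 2x² + 3y²) = 2^{t+1}. -/
/-!
Writing `z = 2x + y√-6` identifies the solutions of `2x² + 3y² = m` with the elements of norm `2m`
in `ℤ[√-6]`, while no element has norm `m ≡ 2 (mod 3)`. So it suffices to show that the numbers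
`N(n)` of elements of norm `n` satisfy `N(m) + N(2m) = 2^(t+1)`, by induction on the prime factors.
Since `-6` is a square mod `p`, Thue's lemma gives `w` of norm `e p` with `e ∈ {1, 2}`. For `p ∤ M`,
an element `z` of norm `pM` has exactly one of `z w̄`, `z w` divisible by `p`, and `z ↦ z w̄ / p` is
a bijection from the first kind onto the elements of norm `eM`, so `N(pM) = 2 N(eM)`; together
with `N(4M) = N(M)` this gives `N(pM) + N(2pM) = 2 (N(M) + N(2M))`.
-/

open Zsqrtd

namespace Zsqrtd

variable {d : ℤ}

instance noZeroDivisors_of_neg [Fact (d < 0)] : NoZeroDivisors (ℤ√d) where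
  eq_zero_or_eq_zero_of_mul_eq_zero {a b} h := by
    have h' := congrArg norm h
    rwa [norm_mul, norm_zero, mul_eq_zero, norm_eq_zero_iff Fact.out,
      norm_eq_zero_iff Fact.out] at h'

instance isDomain_of_neg [Fact (d < 0)] : IsDomain (ℤ√d) := NoZeroDivisors.to_isDomain _

theorem finite_setOf_norm_eq [Fact (d < 0)] (n : ℤ) : {z : ℤ√d | z.norm = n}.Finite := by
  refine (((Set.finite_Icc (-n) n).prod (Set.finite_Icc (-n) n)).image
    fun q => (⟨q.1, q.2⟩ : ℤ√d)).subset ?_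
  rintro z (hz : z.norm = n)
  have hd : d < 0 := Fact.out
  rw [norm_def] at hz
  refine ⟨(z.re, z.im), ⟨⟨?_, ?_⟩, ⟨?_, ?_⟩⟩, rfl⟩ <;>
    nlinarith [mul_self_nonneg z.re, mul_self_nonneg z.im, mul_self_nonneg (z.re - 1),
      mul_self_nonneg (z.re + 1), mul_self_nonneg (z.im - 1), mul_self_nonneg (z.im + 1)]

theorem intCast_mul_dvd_norm_of_dvd {p : ℤ} {x : ℤ√d} (h : (p : ℤ√d) ∣ x) : p * p ∣ x.norm := by
  obtain ⟨k, rfl⟩ := h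
  rw [norm_mul, norm_intCast]
  exact dvd_mul_right _ _

theorem intCast_dvd_of_dvd_norm_of_dvd_im {p : ℤ} (hp : Prime p) {x : ℤ√d}
    (hn : p ∣ x.norm) (hi : p ∣ x.im) : (p : ℤ√d) ∣ x := by
  have hre : p ∣ x.re * x.re := by
    rw [show x.re * x.re = x.norm + d * x.im * x.im by rw [norm_def]; ring]
    exact dvd_add hn (dvd_mul_of_dvd_right hi _)
  exact (intCast_dvd _ _).2 ⟨hp.dvd_of_dvd_pow (n := 2) (by rwa [sq]), hi⟩

theorem not_dvd_re_of_norm_eq {p e : ℤ} (hp : Prime p) (hd : ¬ p ∣ d) (he : ¬ p ∣ e)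
    {w : ℤ√d} (hw : w.norm = e * p) : ¬ p ∣ w.re := by
  intro hre
  have him : p ∣ w.im := by
    have h : p ∣ d * w.im * w.im := by
      rw [show d * w.im * w.im = w.re * w.re - w.norm by rw [norm_def]; ring, hw]
      exact dvd_sub (dvd_mul_of_dvd_left hre _) (dvd_mul_left _ _)
    rw [mul_assoc] at h
    exact hp.dvd_of_dvd_pow (n := 2) (by rw [sq]; exact (hp.dvd_or_dvd h).resolve_left hd)
  obtain ⟨k, hk⟩ := intCast_mul_dvd_norm_of_dvd
    (intCast_dvd_of_dvd_norm_of_dvd_im hp (hw ▸ dvd_mul_left p e) him)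
  exact he ⟨k, mul_right_cancel₀ hp.ne_zero (by rw [← hw, hk]; ring)⟩

theorem dvd_mul_star_or_dvd_mul {p : ℤ} (hp : Prime p) {z w : ℤ√d}
    (hz : p ∣ z.norm) (hw : p ∣ w.norm) : (p : ℤ√d) ∣ z * star w ∨ (p : ℤ√d) ∣ z * w := by
  have key : (z * star w).im * (z * w).im = z.im * z.im * w.norm - w.im * w.im * z.norm := by
    simp only [im_mul, re_star, im_star, norm_def]; ring
  have hdvd : p ∣ (z * star w).im * (z * w).im :=
    key ▸ dvd_sub (dvd_mul_of_dvd_right hw _) (dvd_mul_of_dvd_right hz _)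
  have hn : ∀ v, p ∣ (z * v).norm := fun v => norm_mul z v ▸ dvd_mul_of_dvd_left hz _
  exact (hp.dvd_or_dvd hdvd).imp (intCast_dvd_of_dvd_norm_of_dvd_im hp (hn _))
    (intCast_dvd_of_dvd_norm_of_dvd_im hp (hn _))

theorem intCast_dvd_of_dvd_mul_star_of_dvd_mul {p : ℤ} (hp : Prime p) {z w : ℤ√d}
    (hw : ¬ p ∣ 2 * w.re) (h₁ : (p : ℤ√d) ∣ z * star w) (h₂ : (p : ℤ√d) ∣ z * w) :
    (p : ℤ√d) ∣ z := by
  have h : (p : ℤ√d) ∣ ((2 * w.re : ℤ) : ℤ√d) * z := by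
    convert dvd_add h₁ h₂ using 1
    ext <;> simp <;> ring
  rw [intCast_dvd] at h ⊢
  simp only [re_mul, im_mul, re_intCast, im_intCast, zero_mul, mul_zero, add_zero] at h
  exact ⟨(hp.dvd_or_dvd h.1).resolve_left hw, (hp.dvd_or_dvd h.2).resolve_left hw⟩

noncomputable def normCount (d n : ℤ) : ℕ := {z : ℤ√d | z.norm = n}.ncard

theorem ncard_dvd_mul_star_eq_normCount [Fact (d < 0)] {p e M : ℤ} {w : ℤ√d} (hp : p ≠ 0)
    (he : e ≠ 0) (hw : w.norm = e * p) (hdiv : ∀ u : ℤ√d, u.norm = e * M → (e : ℤ√d) ∣ u * w) :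
    {z : ℤ√d | z.norm = p * M ∧ (p : ℤ√d) ∣ z * star w}.ncard = normCount d (e * M) := by
  have hw' : w * star w = e * p := by rw [← norm_eq_mul_conj, hw]; push_cast; ring
  have hw0 : w ≠ 0 := by
    rintro rfl
    exact mul_ne_zero he hp (by rw [← hw, norm_zero])
  have hp' : (p : ℤ√d) ≠ 0 := Int.cast_ne_zero.2 hp
  have he' : (e : ℤ√d) ≠ 0 := Int.cast_ne_zero.2 he
  -- Since `w w̄ = e p`, `z w̄ = p u` holds if and only if `e z = u w`.
  have key : (fun z => (e : ℤ√d) * z) '' {z | z.norm = p * M ∧ (p : ℤ√d) ∣ z * star w} =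
      (fun u => u * w) '' {u | u.norm = e * M} := by
    ext y
    constructor
    · rintro ⟨z, ⟨hz, u, hu⟩, rfl⟩
      refine ⟨u, ?_, mul_left_cancel₀ hp' ?_⟩
      · refine mul_left_cancel₀ (mul_ne_zero hp hp) ?_
        have := congrArg norm hu
        rw [norm_mul, norm_mul, norm_conj, hz, hw, norm_intCast] at this
        linear_combination -this
      · linear_combination (-w) * hu + z * hw'
    · rintro ⟨u, hu, rfl⟩
      obtain ⟨z, hz⟩ := hdiv u hu
      refine ⟨z, ⟨mul_left_cancel₀ (mul_ne_zero he he) ?_, u, mul_left_cancel₀ he' ?_⟩, hz.symm⟩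
      · have := congrArg norm hz
        rw [norm_mul, norm_mul, hu, hw, norm_intCast] at this
        linear_combination -this
      · linear_combination (-star w) * hz + u * hw'
  rw [normCount, ← Set.ncard_image_of_injective _ (mul_right_injective₀ he'), key,
    Set.ncard_image_of_injective _ (mul_left_injective₀ hw0)]

theorem normCount_mul_of_norm_eq [Fact (d < 0)] {p e M : ℤ} {w : ℤ√d} (hp : Prime p)
    (h2d : ¬ p ∣ 2 * d) (he : ¬ p ∣ e) (hM : ¬ p ∣ M) (hw : w.norm = e * p)
    (hdiv : ∀ u : ℤ√d, u.norm = e * M → (e : ℤ√d) ∣ u * w) :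
    normCount d (p * M) = 2 * normCount d (e * M) := by
  set A := {z : ℤ√d | z.norm = p * M ∧ (p : ℤ√d) ∣ z * star w}
  set B := {z : ℤ√d | z.norm = p * M ∧ (p : ℤ√d) ∣ z * w}
  have hsplit : {z : ℤ√d | z.norm = p * M} = A ∪ B := by
    ext z
    refine ⟨fun hz => (dvd_mul_star_or_dvd_mul hp (hz ▸ dvd_mul_right p M)
      (hw ▸ dvd_mul_left p e)).imp (⟨hz, ·⟩) (⟨hz, ·⟩), ?_⟩
    rintro (⟨hz, -⟩ | ⟨hz, -⟩) <;> exact hz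
  have hdisj : Disjoint A B := by
    refine Set.disjoint_left.2 fun z ⟨hz, h₁⟩ ⟨_, h₂⟩ => hM ?_
    have h2w : ¬ p ∣ 2 * w.re := fun h => (hp.dvd_or_dvd h).elim
      (fun h2 => h2d (dvd_mul_of_dvd_left h2 d))
      (not_dvd_re_of_norm_eq hp (fun hd => h2d (dvd_mul_of_dvd_right hd 2)) he hw)
    obtain ⟨k, hk⟩ :=
      intCast_mul_dvd_norm_of_dvd (intCast_dvd_of_dvd_mul_star_of_dvd_mul hp h2w h₁ h₂)
    exact ⟨k, mul_left_cancel₀ hp.ne_zero (by rw [← hz, hk]; ring)⟩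
  have hstar : star '' A = B := by
    ext z
    rw [Set.image_star, Set.mem_star]
    simp only [A, B, Set.mem_ofPred_eq, norm_conj, ← star_mul, intCast_dvd, re_star, im_star,
      dvd_neg, mul_comm w]
  have hfin : {z : ℤ√d | z.norm = p * M}.Finite := finite_setOf_norm_eq _
  rw [normCount, hsplit, Set.ncard_union_eq hdisj (hfin.subset (hsplit ▸ Set.subset_union_left))
    (hfin.subset (hsplit ▸ Set.subset_union_right)), ← hstar,
    Set.ncard_image_of_injective _ star_injective,
    ncard_dvd_mul_star_eq_normCount hp.ne_zero (by rintro rfl; exact he (dvd_zero p)) hw hdiv,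
    two_mul]

theorem two_dvd_re_of_two_dvd_norm (hd : 2 ∣ d) {v : ℤ√d} (hv : 2 ∣ v.norm) : 2 ∣ v.re := by
  refine Int.prime_two.dvd_of_dvd_pow (n := 2) ?_
  rw [sq, show v.re * v.re = v.norm + d * v.im * v.im by rw [norm_def]; ring]
  exact dvd_add hv (dvd_mul_of_dvd_left (dvd_mul_of_dvd_left hd _) _)

theorem two_dvd_mul_of_two_dvd_norm (hd : 2 ∣ d) {u w : ℤ√d} (hu : 2 ∣ u.norm)
    (hw : 2 ∣ w.norm) : ((2 : ℤ) : ℤ√d) ∣ u * w := by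
  obtain ⟨a, ha⟩ := two_dvd_re_of_two_dvd_norm hd hu
  obtain ⟨b, hb⟩ := two_dvd_re_of_two_dvd_norm hd hw
  obtain ⟨c, rfl⟩ := hd
  rw [intCast_dvd, re_mul, im_mul, ha, hb]
  exact ⟨⟨a * b * 2 + c * u.im * w.im, by ring⟩, ⟨a * w.im + u.im * b, by ring⟩⟩

end Zsqrtd

instance fact_neg_six_lt_zero : Fact ((-6 : ℤ) < 0) := ⟨by norm_num⟩

theorem norm_eq_sq_add_six_mul_sq (z : ℤ√(-6)) : z.norm = z.re ^ 2 + 6 * z.im ^ 2 := by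
  rw [norm_def]; ring

theorem normCount_eq_zero_of_emod_three {n : ℤ} (hn : n % 3 = 2) : normCount (-6) n = 0 := by
  rw [normCount, Set.ncard_eq_zero (finite_setOf_norm_eq n)]
  refine Set.eq_empty_of_forall_notMem fun z (hz : z.norm = n) => ?_
  obtain ⟨k, rfl⟩ : ∃ k, n = 3 * k + 2 := ⟨n / 3, by omega⟩
  have h := congrArg (fun k : ℤ => (k : ZMod 3)) hz
  rw [norm_eq_sq_add_six_mul_sq] at h
  push_cast at h
  generalize (z.re : ZMod 3) = a, (z.im : ZMod 3) = b, (k : ZMod 3) = c at h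
  revert a b c
  decide

theorem normCount_one : normCount (-6) 1 = 2 := by
  have : {z : ℤ√(-6) | z.norm = 1} = {1, -1} := by
    ext z
    simp only [Set.mem_ofPred_eq, Set.mem_insert_iff, Set.mem_singleton_iff,
      norm_eq_sq_add_six_mul_sq, Zsqrtd.ext_iff, re_one, im_one, re_neg, im_neg, neg_zero]
    constructor
    · intro h
      have him : z.im = 0 := by nlinarith [sq_nonneg z.im, sq_nonneg z.re]
      rw [him] at h ⊢
      simpa using h
    · rintro (⟨h1, h2⟩ | ⟨h1, h2⟩) <;> simp [h1, h2]
  rw [normCount, this, Set.ncard_pair (by decide)]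

theorem two_dvd_of_four_dvd_norm {z : ℤ√(-6)} (hz : 4 ∣ z.norm) : ((2 : ℤ) : ℤ√(-6)) ∣ z := by
  obtain ⟨a, ha⟩ := two_dvd_re_of_two_dvd_norm (by norm_num) (dvd_trans (by norm_num) hz)
  obtain ⟨n, hn⟩ := hz
  rw [norm_eq_sq_add_six_mul_sq, ha] at hn
  have h3 : 2 ∣ 3 * z.im ^ 2 := ⟨n - a ^ 2, by linarith⟩
  have hb := Int.prime_two.dvd_of_dvd_pow ((Int.prime_two.dvd_or_dvd h3).resolve_left (by decide))
  exact (intCast_dvd _ _).2 ⟨⟨a, ha⟩, hb⟩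

theorem normCount_four_mul (n : ℤ) : normCount (-6) (4 * n) = normCount (-6) n := by
  have key : (fun z => ((2 : ℤ) : ℤ√(-6)) * z) '' {z | z.norm = n} = {z | z.norm = 4 * n} := by
    ext y
    constructor
    · rintro ⟨z, hz : z.norm = n, rfl⟩
      show (_ * z).norm = _
      rw [norm_mul, norm_intCast, hz]
      ring
    · intro (hy : y.norm = 4 * n)
      obtain ⟨z, rfl⟩ := two_dvd_of_four_dvd_norm ⟨n, hy⟩
      refine ⟨z, ?_, rfl⟩
      rw [norm_mul, norm_intCast] at hy
      show z.norm = n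
      linarith
  rw [normCount, normCount, ← key, Set.ncard_image_of_injective _
    (mul_right_injective₀ (by decide : ((2 : ℤ) : ℤ√(-6)) ≠ 0))]

theorem exists_sq_lt_dvd_sub_mul {p : ℕ} (hp : p.Prime) (c : ℤ) :
    ∃ x y : ℤ, (x ≠ 0 ∨ y ≠ 0) ∧ x ^ 2 < p ∧ y ^ 2 < p ∧ (p : ℤ) ∣ x - c * y := by
  have : NeZero p := ⟨hp.ne_zero⟩
  set r := Nat.sqrt p
  have hr : (r : ℤ) ^ 2 < p := by
    have : r * r ≠ p := fun h => by
      have hr1 : r ≠ 1 := fun h1 => hp.ne_one (by rw [← h, h1])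
      exact Nat.not_prime_mul hr1 hr1 (h ▸ hp)
    exact_mod_cast (sq r).trans_lt ((Nat.sqrt_le p).lt_of_ne this)
  set s := Finset.Icc (0 : ℤ) r ×ˢ Finset.Icc (0 : ℤ) r
  have hcard : (Finset.univ : Finset (ZMod p)).card < s.card := by
    rw [Finset.card_univ, ZMod.card, Finset.card_product, Int.card_Icc, sub_zero,
      Int.toNat_natCast_add_one]
    exact Nat.lt_succ_sqrt p
  obtain ⟨q₁, hq₁, q₂, hq₂, hne, heq⟩ := Finset.exists_ne_map_eq_of_card_lt_of_maps_to hcard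
    (f := fun q => ((q.1 - c * q.2 : ℤ) : ZMod p)) (fun _ _ => Finset.mem_coe.2 (Finset.mem_univ _))
  simp only [s, Finset.mem_product, Finset.mem_Icc] at hq₁ hq₂
  refine ⟨q₁.1 - q₂.1, q₁.2 - q₂.2, ?_, ?_, ?_, ?_⟩
  · by_contra! h
    exact hne (Prod.ext (by omega) (by omega))
  · exact (sq_le_sq' (by linarith) (by linarith)).trans_lt hr
  · exact (sq_le_sq' (by linarith) (by linarith)).trans_lt hr
  · have := (ZMod.intCast_eq_intCast_iff_dvd_sub _ _ _).1 heq.symm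
    rwa [show q₁.1 - c * q₁.2 - (q₂.1 - c * q₂.2) = q₁.1 - q₂.1 - c * (q₁.2 - q₂.2) by ring] at this

theorem exists_norm_eq_mul_of_dvd_sq_add_six {p : ℕ} (hp : p.Prime) {c : ℤ}
    (hc : (p : ℤ) ∣ c ^ 2 + 6) : ∃ (z : ℤ√(-6)) (k : ℤ), 0 < k ∧ k < 7 ∧ z.norm = k * p := by
  obtain ⟨x, y, hxy, hx, hy, hdvd⟩ := exists_sq_lt_dvd_sub_mul hp c
  obtain ⟨k, hk⟩ : (p : ℤ) ∣ x ^ 2 + 6 * y ^ 2 := by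
    rw [show x ^ 2 + 6 * y ^ 2 = (x - c * y) * (x + c * y) + (c ^ 2 + 6) * y ^ 2 by ring]
    exact dvd_add (dvd_mul_of_dvd_left hdvd _) (dvd_mul_of_dvd_left hc _)
  have hpos : 0 < x ^ 2 + 6 * y ^ 2 := by
    rcases hxy with h | h <;> positivity
  have hp0 : (0 : ℤ) < p := by exact_mod_cast hp.pos
  refine ⟨⟨x, y⟩, k, pos_of_mul_pos_right (hk ▸ hpos) hp0.le, ?_, ?_⟩
  · nlinarith
  · rw [norm_eq_sq_add_six_mul_sq, hk, mul_comm]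

theorem exists_norm_eq_or_two_mul_of_norm_eq_mul {z : ℤ√(-6)} {k n : ℤ} (hk₀ : 0 < k)
    (hk₇ : k < 7) (hz : z.norm = k * n) : ∃ w : ℤ√(-6), w.norm = n ∨ w.norm = 2 * n := by
  have hz' := norm_eq_sq_add_six_mul_sq z ▸ hz
  simp only [norm_eq_sq_add_six_mul_sq]
  interval_cases k
  · exact ⟨z, Or.inl (by linarith)⟩
  · exact ⟨z, Or.inr (by linarith)⟩
  · obtain ⟨a, ha⟩ := Int.prime_three.dvd_of_dvd_pow (n := 2) (a := z.re)
      ⟨n - 2 * z.im ^ 2, by linarith⟩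
    refine ⟨⟨2 * z.im, a⟩, Or.inr ?_⟩
    rw [ha] at hz'
    dsimp only
    linarith
  · obtain ⟨w, rfl⟩ := two_dvd_of_four_dvd_norm ⟨n, hz⟩
    refine ⟨w, Or.inl ?_⟩
    rw [norm_mul, norm_intCast] at hz
    rw [← norm_eq_sq_add_six_mul_sq]
    linarith
  · have h5 : (5 : ℤ) ∣ (z.re - 2 * z.im) * (z.re + 2 * z.im) :=
      ⟨n - 2 * z.im ^ 2, by linear_combination hz'⟩
    rcases (Nat.prime_iff_prime_int.mp Nat.prime_five).dvd_or_dvd h5 with ⟨b, hb⟩ | ⟨b, hb⟩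
    · refine ⟨⟨2 * (b + z.im), b⟩, Or.inr ?_⟩
      dsimp only
      rw [show z.re = 5 * b + 2 * z.im by push_cast at hb; linarith] at hz'
      linarith
    · refine ⟨⟨2 * (b - z.im), b⟩, Or.inr ?_⟩
      dsimp only
      rw [show z.re = 5 * b - 2 * z.im by push_cast at hb; linarith] at hz'
      linarith
  · obtain ⟨a, ha⟩ := two_dvd_re_of_two_dvd_norm (v := z) (by norm_num) ⟨3 * n, by rw [hz]; ring⟩
    rw [ha] at hz'
    obtain ⟨b, hb⟩ := Int.prime_three.dvd_of_dvd_pow (n := 2) (a := a)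
      ((Int.prime_three.dvd_or_dvd (⟨n - z.im ^ 2, by linarith⟩ : (3 : ℤ) ∣ 2 * a ^ 2)).resolve_left
        (by decide))
    refine ⟨⟨z.im, b⟩, Or.inl ?_⟩
    rw [hb] at hz'
    dsimp only
    linarith

theorem natCast_not_dvd_two_mul_neg_six {p : ℕ} (hp : p.Prime) (hp3 : 3 < p) :
    ¬ (p : ℤ) ∣ 2 * -6 := by
  intro h
  have h12 : p ∣ 2 ^ 2 * 3 := Int.natCast_dvd.1 h
  rcases hp.dvd_mul.1 h12 with h2 | h3
  · exact absurd (Nat.le_of_dvd two_pos (hp.dvd_of_dvd_pow h2)) (by omega)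
  · exact absurd (Nat.le_of_dvd three_pos h3) (by omega)

theorem exists_norm_eq_of_jacobiSym_eq_one {p : ℕ} (hp : p.Prime) (hp3 : 3 < p)
    (h : jacobiSym (-6) p = 1) : ∃ w : ℤ√(-6), w.norm = 1 * p ∨ w.norm = 2 * p := by
  have := Fact.mk hp
  have h6 : ((-6 : ℤ) : ZMod p) ≠ 0 := by
    rw [Ne, ZMod.intCast_zmod_eq_zero_iff_dvd]
    exact fun h => natCast_not_dvd_two_mul_neg_six hp hp3 (dvd_mul_of_dvd_right h 2)
  obtain ⟨s, hs⟩ := (legendreSym.eq_one_iff p h6).1 (by rwa [jacobiSym.legendreSym.to_jacobiSym])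
  have hc : (p : ℤ) ∣ (s.val : ℤ) ^ 2 + 6 := by
    rw [← ZMod.intCast_zmod_eq_zero_iff_dvd]
    push_cast
    rw [ZMod.natCast_zmod_val, sq, ← hs]
    ring
  obtain ⟨z, k, hk₀, hk₇, hz⟩ := exists_norm_eq_mul_of_dvd_sq_add_six hp hc
  simpa only [one_mul] using exists_norm_eq_or_two_mul_of_norm_eq_mul hk₀ hk₇ hz

theorem card_two_mul_sq_add_three_mul_sq_eq (m : ℤ) :
    Nat.card {q : ℤ × ℤ // 2 * q.1 ^ 2 + 3 * q.2 ^ 2 = m} = normCount (-6) (2 * m) := by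
  have key : (fun q : ℤ × ℤ => (⟨2 * q.1, q.2⟩ : ℤ√(-6))) '' {q | 2 * q.1 ^ 2 + 3 * q.2 ^ 2 = m} =
      {z | z.norm = 2 * m} := by
    ext z
    constructor
    · rintro ⟨q, hq : _ = m, rfl⟩
      show Zsqrtd.norm _ = _
      rw [norm_eq_sq_add_six_mul_sq, ← hq]
      ring
    · intro (hz : z.norm = 2 * m)
      obtain ⟨a, ha⟩ := two_dvd_re_of_two_dvd_norm (v := z) (by norm_num) ⟨m, hz⟩
      refine ⟨(a, z.im), ?_, by ext <;> simp [ha]⟩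
      rw [norm_eq_sq_add_six_mul_sq, ha] at hz
      show _ = m
      linarith
  rw [normCount, ← key, Set.ncard_image_of_injective _ fun q q' h => by
    simp only [Zsqrtd.ext_iff] at h
    exact Prod.ext (mul_left_cancel₀ two_ne_zero h.1) h.2]
  exact Nat.card_coe_set_eq _

theorem normCount_prod_add_normCount_two_mul_prod (s : Finset ℕ)
    (hs : ∀ p ∈ s, p.Prime ∧ 3 < p ∧ jacobiSym (-6) p = 1) :
    normCount (-6) (∏ p ∈ s, p : ℕ) + normCount (-6) (2 * (∏ p ∈ s, p : ℕ)) = 2 ^ (s.card + 1) := by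
  induction s using Finset.induction_on with
  | empty =>
    rw [Finset.prod_empty, Finset.card_empty, Nat.cast_one, mul_one, normCount_one,
      normCount_eq_zero_of_emod_three (by norm_num)]
    rfl
  | insert p s hps ih =>
    obtain ⟨hp, hp3, hJ⟩ := hs p (Finset.mem_insert_self p s)
    specialize ih fun q hq => hs q (Finset.mem_insert_of_mem hq)
    set M : ℤ := ((∏ q ∈ s, q : ℕ) : ℤ)
    have hpZ : Prime (p : ℤ) := Nat.prime_iff_prime_int.mp hp
    have h2d := natCast_not_dvd_two_mul_neg_six hp hp3
    have hM : ¬ (p : ℤ) ∣ M := by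
      rw [Int.natCast_dvd_natCast, hp.prime.dvd_finsetProd_iff]
      rintro ⟨q, hq, hpq⟩
      exact hps ((Nat.prime_dvd_prime_iff_eq hp (hs q (Finset.mem_insert_of_mem hq)).1).1 hpq ▸ hq)
    have h2M : ¬ (p : ℤ) ∣ 2 * M := fun h =>
      (hpZ.dvd_or_dvd h).elim (fun h2 => h2d (dvd_mul_of_dvd_left h2 _)) hM
    rw [Finset.prod_insert hps, Finset.card_insert_of_notMem hps, Nat.cast_mul,
      mul_left_comm 2 (p : ℤ) M, pow_succ, ← ih]
    obtain ⟨w, hw | hw⟩ := exists_norm_eq_of_jacobiSym_eq_one hp hp3 hJ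
    · have step : ∀ N, ¬ (p : ℤ) ∣ N → normCount (-6) (p * N) = 2 * normCount (-6) (1 * N) :=
        fun N hN => normCount_mul_of_norm_eq hpZ h2d hpZ.not_dvd_one hN hw
          fun u _ => by rw [Int.cast_one]; exact one_dvd _
      rw [step M hM, step (2 * M) h2M, one_mul, one_mul]
      ring
    · have step : ∀ N, ¬ (p : ℤ) ∣ N → normCount (-6) (p * N) = 2 * normCount (-6) (2 * N) :=
        fun N hN => normCount_mul_of_norm_eq hpZ h2d
          (fun h2 => h2d (dvd_mul_of_dvd_left h2 _)) hN hw
          fun u hu => two_dvd_mul_of_two_dvd_norm (by norm_num) (hu ▸ dvd_mul_right 2 N)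
            (hw ▸ dvd_mul_right 2 (p : ℤ))
      rw [step M hM, step (2 * M) h2M, ← mul_assoc, show (2 : ℤ) * 2 = 4 by norm_num,
        normCount_four_mul]
      ring

theorem stmt12_general (m t : ℕ) (hsf : Squarefree m) (h24 : m % 24 = 11)
    (ht : m.primeFactors.card = t)
    (hJ : ∀ p ∈ m.primeFactors, jacobiSym (-6) p = 1) :
    Nat.card {q : ℤ × ℤ // 2 * q.1 ^ 2 + 3 * q.2 ^ 2 = (m : ℤ)} = 2 ^ (t + 1) := by
  have hprimes : ∀ p ∈ m.primeFactors, p.Prime ∧ 3 < p ∧ jacobiSym (-6) p = 1 := by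
    intro p hp
    have hp' := Nat.prime_of_mem_primeFactors hp
    have hpm := Nat.dvd_of_mem_primeFactors hp
    refine ⟨hp', ?_, hJ p hp⟩
    by_contra! h
    have := hp'.two_le
    interval_cases p <;> omega
  have hcount := normCount_prod_add_normCount_two_mul_prod _ hprimes
  rw [Nat.prod_primeFactors_of_squarefree hsf, normCount_eq_zero_of_emod_three (by omega),
    zero_add] at hcount
  rw [card_two_mul_sq_add_three_mul_sq_eq, hcount, ht]

theorem stmt12 (m t : ℕ) (hm : 0 < m) (hsf : Squarefree m) (h24 : m % 24 = 11)
    (ht : m.primeFactors.card = t)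
    (hJ : ∀ p ∈ m.primeFactors, jacobiSym (-6) p = 1) :
    Nat.card {q : ℤ × ℤ // 2 * q.1 ^ 2 + 3 * q.2 ^ 2 = (m : ℤ)} = 2 ^ (t + 1) :=
  stmt12_general m t hsf h24 ht hJ
end
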